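/- arXiv:2303.15919 — 2 statements merged into one kernel-verified Lean document; each statement's English description precedes it below -/
import Mathlib

section
/- (Theorem 1.) Let a ∈ ℝ, let z ∈ ℝ^n with z ≠ 0, and let x ∈ L^n_K. Define the hyperplane H̃_{z,a} := {y ∈ L^n_K : cosh(√(−K)·a)·⟨z, y_s⟩ − sinh(√(−K)·a)·‖z‖·y_t = 0}. Then H̃_{z,a} is nonempty and the infimum of d_L(x, y) over y ∈ H̃_{z,a} equals (1/√(−K))·| arsinh( √(−K)·( cosh(√(−K)·a)·⟨z, x_s⟩ − sinh(√(−K)·a)·‖z‖·x_t ) / √( ‖cosh(√(−K)·a)·z‖² − (sinh(√(−K)·a)·‖z‖)² ) ) |, where arsinh is the inverse hyperbolic sine and ‖·‖ is the Euclidean norm on ℝ^n. -/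
open scoped RealInnerProductSpace

noncomputable section

/-- Lorentzian inner product on `ℝ^{n+1} = ℝ × ℝ^n` (time component first). -/
def lprod {n : ℕ} (x y : ℝ × EuclideanSpace ℝ (Fin n)) : ℝ :=
  -(x.1 * y.1) + ⟪x.2, y.2⟫

/-- The Lorentz model `L^n_K`. -/
def LorentzModel (n : ℕ) (K : ℝ) : Set (ℝ × EuclideanSpace ℝ (Fin n)) :=
  {x | lprod x x = 1 / K ∧ 0 < x.1}

/-- Inverse hyperbolic cosine: `arcosh t = log (t + √(t² − 1))`. -/
def arcosh (t : ℝ) : ℝ := Real.log (t + Real.sqrt (t ^ 2 - 1))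

/-- Geodesic distance on the Lorentz model. -/
def dL {n : ℕ} (K : ℝ) (x y : ℝ × EuclideanSpace ℝ (Fin n)) : ℝ :=
  (1 / Real.sqrt (-K)) * arcosh (K * lprod x y)

/-- Origin of the Lorentz model. -/
def lorigin (n : ℕ) (K : ℝ) : ℝ × EuclideanSpace ℝ (Fin n) :=
  (1 / Real.sqrt (-K), 0)

lemma aux_future {n : ℕ} (p x : ℝ × EuclideanSpace ℝ (Fin n))
    (hp : lprod p p < 0) (hx : lprod x x < 0) (hxt : 0 < x.1)
    (hpx : lprod p x < 0) : 0 < p.1 := by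
  have h1 : ⟪p.2, x.2⟫ ≤ ‖p.2‖ * ‖x.2‖ := real_inner_le_norm _ _
  have h2 : -(⟪x.2, p.2⟫) ≤ ‖x.2‖ * ‖p.2‖ := by
    have := real_inner_le_norm x.2 (-p.2)
    simpa using this
  have hpp : ‖p.2‖^2 < p.1^2 := by
    have := real_inner_self_eq_norm_sq p.2
    simp only [lprod] at hp; nlinarith
  have hxx : ‖x.2‖^2 < x.1^2 := by
    have := real_inner_self_eq_norm_sq x.2
    simp only [lprod] at hx; nlinarith
  simp only [lprod] at hpx
  have hip : ⟪p.2, x.2⟫ = ⟪x.2, p.2⟫ := real_inner_comm _ _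
  by_contra h
  push_neg at h
  have hnp : (0:ℝ) ≤ ‖p.2‖ := norm_nonneg _
  have hnx : (0:ℝ) ≤ ‖x.2‖ := norm_nonneg _
  have ha : ‖p.2‖ < -p.1 := by nlinarith
  have hb : ‖x.2‖ < x.1 := by nlinarith
  have hm : ‖p.2‖ * ‖x.2‖ < (-p.1) * x.1 := by
    rcases lt_or_eq_of_le hnp with h' | h'
    · exact mul_lt_mul'' ha hb hnp hnx
    · nlinarith
  linarith

lemma aux_revCS {n : ℕ} (p y : ℝ × EuclideanSpace ℝ (Fin n))
    (hp : lprod p p < 0) (hy : lprod y y < 0) (hpt : 0 < p.1) (hyt : 0 < y.1) :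
    Real.sqrt ((-lprod p p) * (-lprod y y)) ≤ -lprod p y := by
  have h1 : ⟪p.2, y.2⟫ ≤ ‖p.2‖ * ‖y.2‖ := real_inner_le_norm _ _
  have hpp : ‖p.2‖^2 < p.1^2 := by
    have := real_inner_self_eq_norm_sq p.2
    simp only [lprod] at hp; nlinarith
  have hyy : ‖y.2‖^2 < y.1^2 := by
    have := real_inner_self_eq_norm_sq y.2
    simp only [lprod] at hy; nlinarith
  have hnp : (0:ℝ) ≤ ‖p.2‖ := norm_nonneg _
  have hny : (0:ℝ) ≤ ‖y.2‖ := norm_nonneg _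
  have hple : ‖p.2‖ < p.1 := by nlinarith
  have hyle : ‖y.2‖ < y.1 := by nlinarith
  have key : (-lprod p p) * (-lprod y y) ≤ (p.1 * y.1 - ‖p.2‖ * ‖y.2‖)^2 := by
    have ep := real_inner_self_eq_norm_sq p.2
    have ey := real_inner_self_eq_norm_sq y.2
    simp only [lprod]
    nlinarith [sq_nonneg (p.1 * ‖y.2‖ - y.1 * ‖p.2‖)]
  have h0 : 0 ≤ p.1 * y.1 - ‖p.2‖ * ‖y.2‖ := by nlinarith
  calc Real.sqrt ((-lprod p p) * (-lprod y y)) ≤ Real.sqrt ((p.1 * y.1 - ‖p.2‖ * ‖y.2‖)^2) :=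
        Real.sqrt_le_sqrt key
    _ = p.1 * y.1 - ‖p.2‖ * ‖y.2‖ := Real.sqrt_sq h0
    _ ≤ -lprod p y := by simp only [lprod]; nlinarith

lemma arcosh_mono {t₁ t₂ : ℝ} (h1 : 1 ≤ t₁) (h : t₁ ≤ t₂) : arcosh t₁ ≤ arcosh t₂ := by
  unfold arcosh
  have hpos : 0 < t₁ + Real.sqrt (t₁^2 - 1) := by positivity
  apply Real.log_le_log hpos
  gcongr <;> nlinarith

lemma arcosh_sqrt_one_add_sq (u : ℝ) :
    arcosh (Real.sqrt (1 + u^2)) = |Real.arsinh u| := by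
  have habs : |Real.arsinh u| = Real.arsinh |u| := by
    rcases abs_cases u with ⟨h1, h2⟩ | ⟨h1, h2⟩
    · rw [h1, abs_of_nonneg (Real.arsinh_nonneg_iff.2 h2)]
    · rw [h1, abs_of_nonpos (Real.arsinh_nonpos_iff.2 h2.le), ← Real.arsinh_neg]
  rw [habs, Real.arsinh, arcosh]
  have h1 : Real.sqrt (1 + u^2) ^ 2 - 1 = u^2 := by
    rw [Real.sq_sqrt (by positivity)]; ring
  rw [h1, Real.sqrt_sq_eq_abs, ← sq_abs u]
  ring_nf

set_option maxHeartbeats 1000000 in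
theorem distance_to_reparameterized_lorentz_hyperplane
    (n : ℕ) (hn : 1 ≤ n) (K : ℝ) (hK : K < 0)
    (a : ℝ) (z : EuclideanSpace ℝ (Fin n)) (hz : z ≠ 0)
    (x : ℝ × EuclideanSpace ℝ (Fin n)) (hx : x ∈ LorentzModel n K)
    (H : Set (ℝ × EuclideanSpace ℝ (Fin n)))
    (hH : H = {y ∈ LorentzModel n K |
      Real.cosh (Real.sqrt (-K) * a) * ⟪z, y.2⟫ -
        Real.sinh (Real.sqrt (-K) * a) * ‖z‖ * y.1 = 0}) :
    H.Nonempty ∧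
    sInf (dL K x '' H) =
      (1 / Real.sqrt (-K)) *
        |Real.arsinh (Real.sqrt (-K) *
          (Real.cosh (Real.sqrt (-K) * a) * ⟪z, x.2⟫ -
            Real.sinh (Real.sqrt (-K) * a) * ‖z‖ * x.1) /
          Real.sqrt (‖Real.cosh (Real.sqrt (-K) * a) • z‖ ^ 2 -
            (Real.sinh (Real.sqrt (-K) * a) * ‖z‖) ^ 2))| := by
  subst hH
  obtain ⟨hxL, hxt⟩ := hx
  set s := Real.sqrt (-K) with hs_def
  have hs : 0 < s := Real.sqrt_pos.2 (by linarith)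
  have hs2 : s^2 = -K := Real.sq_sqrt (by linarith)
  set c := Real.cosh (s * a) with hc_def
  set sh := Real.sinh (s * a) with hsh_def
  have hch : c^2 - sh^2 = 1 := Real.cosh_sq_sub_sinh_sq _
  have hc1 : 1 ≤ c := Real.one_le_cosh _
  clear_value s c sh
  have hZ : 0 < ‖z‖ := norm_pos_iff.2 hz
  have hxL' : -(x.1*x.1) + ⟪x.2,x.2⟫ = 1/K := hxL
  obtain ⟨m, hm⟩ : ∃ m : ℝ, m * ‖z‖^2 = c * ⟪z,x.2⟫ - sh * ‖z‖ * x.1 :=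
    ⟨(c * ⟪z,x.2⟫ - sh * ‖z‖ * x.1) / ‖z‖^2, by field_simp⟩
  have hzz : (⟪z, z⟫ : ℝ) = ‖z‖^2 := real_inner_self_eq_norm_sq z
  set p : ℝ × EuclideanSpace ℝ (Fin n) := (x.1 - m*‖z‖*sh, x.2 - (m*c) • z) with hp_def
  have hp1 : p.1 = x.1 - m*‖z‖*sh := rfl
  have hp2 : p.2 = x.2 - (m*c) • z := rfl
  clear_value p
  -- inner product expansions
  have hip1 : (⟪z, p.2⟫ : ℝ) = ⟪z,x.2⟫ - m*c*‖z‖^2 := by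
    simp only [hp2, inner_sub_right, real_inner_smul_right, hzz]
  have hip2 : (⟪p.2, p.2⟫ : ℝ) = ⟪x.2,x.2⟫ - 2*(m*c)*⟪z,x.2⟫ + (m*c)^2*‖z‖^2 := by
    simp only [hp2, inner_sub_left, inner_sub_right, real_inner_smul_left,
      real_inner_smul_right, hzz, real_inner_comm x.2 z]
    ring
  have hip3 : (⟪x.2, p.2⟫ : ℝ) = ⟪x.2,x.2⟫ - m*c*⟪z,x.2⟫ := by
    simp only [hp2, inner_sub_right, real_inner_smul_right, real_inner_comm x.2 z]
  have hip3' : (⟪p.2, x.2⟫ : ℝ) = ⟪x.2,x.2⟫ - m*c*⟪z,x.2⟫ := by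
    rw [real_inner_comm, hip3]
  -- key lprod computations
  have hppp : lprod p p = 1/K - (m*‖z‖)^2 := by
    simp only [lprod, hip2, hp1]
    rw [← hxL']
    linear_combination 2*m*hm + m^2*‖z‖^2*hch
  have hxp : lprod x p = 1/K - (m*‖z‖)^2 := by
    simp only [lprod, hip3, hp1]
    rw [← hxL']
    linear_combination m*hm
  have hpx : lprod p x = 1/K - (m*‖z‖)^2 := by
    simp only [lprod, hip3', hp1]
    rw [← hxL']
    linear_combination m*hm
  have hKneg : 1/K < 0 := div_neg_of_pos_of_neg one_pos hK
  have hpppneg : lprod p p < 0 := by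
    rw [hppp]; have h := sq_nonneg (m*‖z‖); linarith only [h, hKneg]
  have hxxneg : lprod x x < 0 := by rw [hxL]; exact hKneg
  have hpt : 0 < p.1 := by
    refine aux_future p x hpppneg hxxneg hxt ?_
    rw [hpx]; have h := sq_nonneg (m*‖z‖); linarith only [h, hKneg]
  set D := Real.sqrt (1 + s^2*(m*‖z‖)^2) with hD_def
  have hDpos : 0 < D := Real.sqrt_pos.2 (by positivity)
  have hD2 : D^2 = 1 + s^2*(m*‖z‖)^2 := Real.sq_sqrt (by positivity)
  have hD1 : 1 ≤ D := by
    have h := sq_nonneg (s*(m*‖z‖))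
    nlinarith only [hD2, hDpos, h, sq_nonneg (D - 1), sq_nonneg (D + 1)]
  have hDne : D ≠ 0 := ne_of_gt hDpos
  have hKne : K ≠ 0 := ne_of_lt hK
  clear_value D
  set y0 : ℝ × EuclideanSpace ℝ (Fin n) := (p.1 / D, D⁻¹ • p.2) with hy0_def
  have hy01 : y0.1 = p.1 / D := rfl
  have hy02 : y0.2 = D⁻¹ • p.2 := rfl
  clear_value y0
  have hy0pp : lprod y0 y0 = 1/K := by
    have e2 : lprod p p = 1/K - (m*‖z‖)^2 := hppp
    simp only [lprod, hy01, hy02, real_inner_smul_left, real_inner_smul_right] at e2 ⊢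
    have key : -(p.1/D*(p.1/D)) + D⁻¹*(D⁻¹*⟪p.2,p.2⟫) = (-(p.1*p.1) + ⟪p.2,p.2⟫)/D^2 := by
      field_simp
    rw [key, e2, hD2]
    field_simp
    linear_combination -(m*‖z‖)^2*hs2
  have hy0t : 0 < y0.1 := by rw [hy01]; exact div_pos hpt hDpos
  have hy0hyp : c * ⟪z, y0.2⟫ - sh * ‖z‖ * y0.1 = 0 := by
    rw [hy02, hy01, real_inner_smul_right, hip1, hp1]
    linear_combination (-D⁻¹)*hm + (-(D⁻¹)*m*‖z‖^2)*hch
  have hy0H : y0 ∈ {y ∈ LorentzModel n K | c * ⟪z, y.2⟫ - sh * ‖z‖ * y.1 = 0} :=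
    ⟨⟨hy0pp, hy0t⟩, hy0hyp⟩
  -- distance to y0
  have hxy0 : K * lprod x y0 = D := by
    have h1 : lprod x y0 = (lprod x p) / D := by
      simp only [lprod, hy01, hy02, real_inner_smul_right]
      ring
    rw [h1, hxp]
    field_simp
    linear_combination -(m*‖z‖)^2*hs2 - hD2
  -- lower bound
  have lb : ∀ w ∈ dL K x '' {y ∈ LorentzModel n K | c * ⟪z, y.2⟫ - sh * ‖z‖ * y.1 = 0},
      dL K x y0 ≤ w := by
    rintro w ⟨y, ⟨⟨hyL, hyt⟩, hyeq⟩, rfl⟩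
    have hxyp : lprod x y = lprod p y := by
      simp only [lprod, hp1, hp2, inner_sub_left, real_inner_smul_left]
      linear_combination m*hyeq
    have hyL' : lprod y y < 0 := by rw [hyL]; exact hKneg
    have hrc := aux_revCS p y hpppneg hyL' hpt hyt
    have h1 : (-lprod p p) * (-lprod y y) = (1 + s^2*(m*‖z‖)^2)/K^2 := by
      rw [hppp, hyL]
      field_simp
      linear_combination -(m*‖z‖)^2*hs2
    have h3 : Real.sqrt ((1 + s^2*(m*‖z‖)^2)/K^2) = D / (-K) := by
      rw [Real.sqrt_div (by positivity), Real.sqrt_sq_eq_abs, abs_of_neg hK, ← hD_def]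
    rw [h1, h3] at hrc
    have hKly : D ≤ K * lprod x y := by
      rw [hxyp]
      have h4 : (-K) * (D / (-K)) ≤ (-K) * (-lprod p y) :=
        mul_le_mul_of_nonneg_left hrc (by linarith only [hK])
      have h5 : (-K) * (D / (-K)) = D := by field_simp
      calc D = (-K) * (D / (-K)) := h5.symm
        _ ≤ (-K) * (-lprod p y) := h4
        _ = K * lprod p y := by ring
    have hmono := arcosh_mono hD1 hKly
    unfold dL
    rw [← hs_def]
    have h1s : (0:ℝ) ≤ 1/s := by positivity
    calc (1/s) * arcosh (K * lprod x y0) = (1/s) * arcosh D := by rw [hxy0]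
      _ ≤ (1/s) * arcosh (K * lprod x y) := mul_le_mul_of_nonneg_left hmono h1s
  have hmem : dL K x y0 ∈ dL K x '' {y ∈ LorentzModel n K | c * ⟪z, y.2⟫ - sh * ‖z‖ * y.1 = 0} :=
    ⟨y0, hy0H, rfl⟩
  refine ⟨⟨y0, hy0H⟩, ?_⟩
  have hinf : sInf (dL K x '' {y ∈ LorentzModel n K | c * ⟪z, y.2⟫ - sh * ‖z‖ * y.1 = 0})
      = dL K x y0 :=
    le_antisymm (csInf_le ⟨dL K x y0, lb⟩ hmem) (le_csInf ⟨_, hmem⟩ lb)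
  rw [hinf]
  -- compute the RHS
  have hnorm : ‖c • z‖ = c * ‖z‖ := by
    rw [norm_smul, Real.norm_eq_abs, abs_of_pos (by linarith : (0:ℝ) < c)]
  have hden : ‖c • z‖^2 - (sh*‖z‖)^2 = ‖z‖^2 := by
    rw [hnorm]; linear_combination ‖z‖^2*hch
  have hsden : Real.sqrt (‖c • z‖^2 - (sh*‖z‖)^2) = ‖z‖ := by
    rw [hden, Real.sqrt_sq (le_of_lt hZ)]
  rw [hsden]
  have harg : s * (c * ⟪z,x.2⟫ - sh * ‖z‖ * x.1) / ‖z‖ = s * (m*‖z‖) := by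
    rw [← hm]; field_simp
  rw [harg]
  -- dL K x y0 = (1/s) * |arsinh (s*(m*‖z‖))|
  unfold dL
  rw [← hs_def, hxy0, hD_def]
  rw [show s^2*(m*‖z‖)^2 = (s*(m*‖z‖))^2 by ring]
  rw [arcosh_sqrt_one_add_sq]
end
end

section
/- (Parallel transport preserves the Lorentzian metric.) Let x, y ∈ L^n_K and define, for v ∈ ℝ^{n+1}, the parallel transport PT_{x→y}(v) := v + ( ⟨y, v⟩_L / (1/(−K) − ⟨x, y⟩_L) )·(x + y). Then for all u, v ∈ ℝ^{n+1} with ⟨x, u⟩_L = 0 and ⟨x, v⟩_L = 0 it holds that ⟨y, PT_{x→y}(v)⟩_L = 0 and ⟨PT_{x→y}(u), PT_{x→y}(v)⟩_L = ⟨u, v⟩_L; in particular, parallel transport maps the tangent space at x to the tangent space at y and preserves Lorentzian inner products of tangent vectors. -/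
open scoped RealInnerProductSpace

noncomputable section

lemma lprod_comm {n : ℕ} (x y : ℝ × EuclideanSpace ℝ (Fin n)) :
    lprod x y = lprod y x := by
  simp [lprod, mul_comm, real_inner_comm]

lemma lprod_add_right {n : ℕ} (x y z : ℝ × EuclideanSpace ℝ (Fin n)) :
    lprod x (y + z) = lprod x y + lprod x z := by
  simp [lprod, inner_add_right, mul_add]; ring

lemma lprod_smul_right {n : ℕ} (c : ℝ) (x y : ℝ × EuclideanSpace ℝ (Fin n)) :
    lprod x (c • y) = c * lprod x y := by
  simp [lprod, inner_smul_right]; ring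

lemma lprod_add_left {n : ℕ} (x y z : ℝ × EuclideanSpace ℝ (Fin n)) :
    lprod (x + y) z = lprod x z + lprod y z := by
  rw [lprod_comm, lprod_add_right, lprod_comm z x, lprod_comm z y]

lemma lprod_smul_left {n : ℕ} (c : ℝ) (x y : ℝ × EuclideanSpace ℝ (Fin n)) :
    lprod (c • x) y = c * lprod x y := by
  rw [lprod_comm, lprod_smul_right, lprod_comm y x]

lemma lprod_neg_of_mem {n : ℕ} {K : ℝ} (hK : K < 0)
    {x y : ℝ × EuclideanSpace ℝ (Fin n)}
    (hx : x ∈ LorentzModel n K) (hy : y ∈ LorentzModel n K) :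
    lprod x y < 0 := by
  obtain ⟨hx1, hx2⟩ := hx
  obtain ⟨hy1, hy2⟩ := hy
  have hix : ⟪x.2, x.2⟫ = ‖x.2‖ ^ 2 := real_inner_self_eq_norm_sq x.2
  have hiy : ⟪y.2, y.2⟫ = ‖y.2‖ ^ 2 := real_inner_self_eq_norm_sq y.2
  have hcs : ⟪x.2, y.2⟫ ≤ ‖x.2‖ * ‖y.2‖ := real_inner_le_norm x.2 y.2
  simp only [lprod] at hx1 hy1 ⊢
  rw [hix] at hx1
  rw [hiy] at hy1
  have hKinv : 1 / K < 0 := one_div_neg.mpr hK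
  have hnx : (0:ℝ) ≤ ‖x.2‖ := norm_nonneg _
  have hny : (0:ℝ) ≤ ‖y.2‖ := norm_nonneg _
  nlinarith [mul_pos hx2 hy2, sq_nonneg (x.1 - ‖x.2‖), sq_nonneg (y.1 - ‖y.2‖),
    mul_nonneg hnx hny, sq_nonneg (x.1 * ‖y.2‖ - y.1 * ‖x.2‖)]

theorem parallel_transport_preserves_lorentzian_metric
    (n : ℕ) (hn : 1 ≤ n) (K : ℝ) (hK : K < 0)
    (x y : ℝ × EuclideanSpace ℝ (Fin n))
    (hx : x ∈ LorentzModel n K) (hy : y ∈ LorentzModel n K)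
    (PT : (ℝ × EuclideanSpace ℝ (Fin n)) → (ℝ × EuclideanSpace ℝ (Fin n)))
    (hPT : ∀ v, PT v = v + (lprod y v / (1 / (-K) - lprod x y)) • (x + y)) :
    ∀ u v : ℝ × EuclideanSpace ℝ (Fin n),
      lprod x u = 0 → lprod x v = 0 →
        lprod y (PT v) = 0 ∧ lprod (PT u) (PT v) = lprod u v := by
  intro u v hu hv
  have hK0 : K ≠ 0 := ne_of_lt hK
  have hcneg : lprod x y < 0 := lprod_neg_of_mem hK hx hy
  have hdpos : 0 < 1 / (-K) - lprod x y := by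
    have h1 : 0 < 1 / (-K) := one_div_pos.mpr (neg_pos.mpr hK)
    linarith
  have hdne : 1 / (-K) - lprod x y ≠ 0 := ne_of_gt hdpos
  have h1 : 1 + K * lprod x y ≠ 0 := by nlinarith [mul_pos_of_neg_of_neg hK hcneg]
  have h2 : K + K ^ 2 * lprod x y ≠ 0 := by
    have : K + K ^ 2 * lprod x y = K * (1 + K * lprod x y) := by ring
    rw [this]
    exact mul_ne_zero hK0 h1
  have hxx : lprod x x = 1 / K := hx.1
  have hyy : lprod y y = 1 / K := hy.1
  have hyx : lprod y x = lprod x y := lprod_comm y x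
  have hux : lprod u x = 0 := by rw [lprod_comm]; exact hu
  have hvx : lprod v x = 0 := by rw [lprod_comm]; exact hv
  constructor
  · rw [hPT v]
    simp only [lprod_add_right, lprod_smul_right]
    rw [hyx, hyy]
    field_simp [hK0, h1, h2, show -1 - K * lprod x y ≠ 0 from fun h => h1 (by linarith)]
    ring
  · rw [hPT u, hPT v]
    simp only [lprod_add_left, lprod_add_right, lprod_smul_left, lprod_smul_right]
    simp only [hv, hux, hvx, hxx, hyy, hyx, lprod_comm u y, zero_add, add_zero]
    field_simp [hK0, h1, h2, show -1 - K * lprod x y ≠ 0 from fun h => h1 (by linarith)]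
    ring
end
end
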